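/- For positive reals j, r with j < r, ∫_{-∞}^{∞} t·sin(t·ln(j/r))/(t² + 9/4) dt = -π·(j/r)^{3/2}. -/

import Mathlib

/-!
Integrating by parts against `d/dt [t / (t² + c²)] = (c² - t²) / (c² + t²)²` turns
`a ∫_{-T}^{T} t sin(ta) / (t² + c²) dt` into `∫_{-T}^{T} cos(ta) (c² - t²) / (c² + t²)² dt`
plus a boundary term of size `O(1/T)`. The new integrand is absolutely integrable, and its
integral comes from Fourier inversion: splitting at `0`, the Fourier transform of
`|x| e^{-c|x|}` at `ξ` is `(c + is)⁻² + (c - is)⁻² = 2 (c² - s²) / (c² + s²)²` with `s = 2πξ`.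
So the symmetric principal value is `π sign(a) e^{-c|a|}`; here `c = 3/2` and `a = log (j/r) < 0`.
-/

open Real Filter MeasureTheory intervalIntegral Set
open scoped FourierTransform Topology

section Laplace

variable {z : ℂ}

lemma norm_ofReal_pow_mul_cexp_neg_mul {x : ℝ} (hx : 0 ≤ x) (n : ℕ) :
    ‖(x : ℂ) ^ n * Complex.exp (-(z * x))‖ = x ^ (n : ℝ) * exp (-z.re * x) := by
  simp [Complex.norm_exp, abs_of_nonneg hx]

lemma integrableOn_Ioi_ofReal_mul_cexp_neg_mul (hz : 0 < z.re) :
    IntegrableOn (fun x : ℝ => (x : ℂ) * Complex.exp (-(z * x))) (Ioi 0) := by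
  refine (integrable_norm_iff (by fun_prop)).mp ?_
  refine (integrableOn_rpow_mul_exp_neg_mul_rpow (s := 1) (p := 1) (by norm_num) one_pos
    hz).congr_fun (fun x hx => ?_) measurableSet_Ioi
  simpa using (norm_ofReal_pow_mul_cexp_neg_mul (z := z) (le_of_lt hx) 1).symm

lemma tendsto_ofReal_pow_mul_cexp_neg_mul_atTop (hz : 0 < z.re) (n : ℕ) :
    Tendsto (fun x : ℝ => (x : ℂ) ^ n * Complex.exp (-(z * x))) atTop (𝓝 0) := by
  refine tendsto_zero_iff_norm_tendsto_zero.mpr <|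
    (tendsto_rpow_mul_exp_neg_mul_atTop_nhds_zero n z.re hz).congr' ?_
  filter_upwards [eventually_ge_atTop 0] with x hx
  exact (norm_ofReal_pow_mul_cexp_neg_mul hx n).symm

lemma integral_Ioi_ofReal_mul_cexp_neg_mul (hz : 0 < z.re) :
    ∫ x : ℝ in Ioi 0, (x : ℂ) * Complex.exp (-(z * x)) = 1 / z ^ 2 := by
  have hz0 : z ≠ 0 := by rintro rfl; simp at hz
  let G : ℝ → ℂ := fun x => -((x / z + 1 / z ^ 2) * Complex.exp (-(z * x)))
  have hG : ∀ x : ℝ, HasDerivAt G (x * Complex.exp (-(z * x))) x := by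
    intro x
    have hexp : HasDerivAt (fun w : ℂ => Complex.exp (-(z * w)))
        (Complex.exp (-(z * x)) * -z) x := by
      simpa using ((hasDerivAt_id (x : ℂ)).const_mul z).neg.cexp
    refine ((((hasDerivAt_id (x : ℂ)).div_const z).add_const (1 / z ^ 2)).fun_mul
      hexp).fun_neg.comp_ofReal.congr_deriv ?_
    simp only [id]
    field_simp
    ring
  have hlim : Tendsto G atTop (𝓝 0) := by
    have h := ((tendsto_ofReal_pow_mul_cexp_neg_mul_atTop hz 1).const_mul (1 / z)).add
      ((tendsto_ofReal_pow_mul_cexp_neg_mul_atTop hz 0).const_mul (1 / z ^ 2))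
    simp only [mul_zero, add_zero] at h
    convert h.neg using 1
    · ext x; simp only [G]; ring
    · simp
  rw [integral_Ioi_of_hasDerivAt_of_tendsto' (fun x _ => hG x)
    (integrableOn_Ioi_ofReal_mul_cexp_neg_mul hz) hlim]
  simp [G]

end Laplace

section Kernel

variable {c : ℝ}

lemma integrable_inv_sq_add_sq (hc : c ≠ 0) : Integrable fun t : ℝ => (c ^ 2 + t ^ 2)⁻¹ := by
  refine ((integrable_inv_one_add_sq.comp_div hc).const_mul (c ^ 2)⁻¹).congr
    (Eventually.of_forall fun t => ?_)
  field_simp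

lemma abs_sq_sub_sq_div_sq_add_sq_sq_le (hc : c ≠ 0) (t : ℝ) :
    |(c ^ 2 - t ^ 2) / (c ^ 2 + t ^ 2) ^ 2| ≤ (c ^ 2 + t ^ 2)⁻¹ := by
  have hpos : 0 < c ^ 2 + t ^ 2 := by positivity
  rw [abs_div, abs_of_pos (pow_pos hpos 2), div_le_iff₀ (pow_pos hpos 2),
    pow_two (c ^ 2 + t ^ 2), inv_mul_cancel_left₀ hpos.ne']
  exact abs_sub_le_of_nonneg_of_le (sq_nonneg c) (by nlinarith [sq_nonneg t]) (sq_nonneg t)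
    (by nlinarith [sq_nonneg c])

lemma integrable_sq_sub_sq_div_sq_add_sq_sq (hc : c ≠ 0) :
    Integrable fun t : ℝ => (c ^ 2 - t ^ 2) / (c ^ 2 + t ^ 2) ^ 2 :=
  (integrable_inv_sq_add_sq hc).mono' (Measurable.aestronglyMeasurable (by fun_prop))
    (Eventually.of_forall (abs_sq_sub_sq_div_sq_add_sq_sq_le hc))

end Kernel

section Fourier

variable {c : ℝ}

lemma integrable_abs_mul_exp_neg_mul_abs (hc : 0 < c) :
    Integrable fun x : ℝ => |x| * exp (-(c * |x|)) := by
  have hIoi : IntegrableOn (fun x : ℝ => |x| * exp (-(c * |x|))) (Ioi 0) :=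
    (integrableOn_rpow_mul_exp_neg_mul_rpow (s := 1) (p := 1) (by norm_num) one_pos
      hc).congr_fun (fun x hx => by simp [abs_of_pos (mem_Ioi.mp hx)]) measurableSet_Ioi
  have hIic : IntegrableOn (fun x : ℝ => |x| * exp (-(c * |x|))) (Iic 0) :=
    (integrableOn_Iic_iff_integrableOn_Iio enorm_ne_top).mpr <| by
      have h := IntegrableOn.comp_neg_Iio (μ := volume) (c := (0 : ℝ))
        (neg_zero (G := ℝ) ▸ hIoi)
      simp only [abs_neg] at h
      exact h
  rw [← integrableOn_univ, ← Iic_union_Ioi (a := 0)]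
  exact hIic.union hIoi

lemma fourier_abs_mul_exp_neg_mul_abs (hc : 0 < c) (ξ : ℝ) :
    𝓕 (fun x : ℝ => ((|x| * exp (-(c * |x|)) : ℝ) : ℂ)) ξ =
      ((2 * ((c ^ 2 - (2 * π * ξ) ^ 2) / (c ^ 2 + (2 * π * ξ) ^ 2) ^ 2) : ℝ) : ℂ) := by
  set s := 2 * π * ξ
  rw [Real.fourier_real_eq_integral_exp_smul]
  simp only [smul_eq_mul]
  set f : ℝ → ℂ := fun v => Complex.exp (↑(-2 * π * v * ξ) * Complex.I) *
    ((|v| * exp (-(c * |v|)) : ℝ) : ℂ)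
  have hf : Integrable f := by
    refine (integrable_abs_mul_exp_neg_mul_abs hc).ofReal.bdd_mul (c := 1) (by fun_prop) ?_
    exact Eventually.of_forall fun v => by rw [Complex.norm_exp_ofReal_mul_I]
  have hIoi : ∫ v in Ioi 0, f v = 1 / (c + s * Complex.I) ^ 2 := by
    rw [← integral_Ioi_ofReal_mul_cexp_neg_mul (by simpa using hc)]
    refine setIntegral_congr_fun measurableSet_Ioi fun v hv => ?_
    simp only [f, abs_of_pos (mem_Ioi.mp hv), s]
    push_cast
    rw [mul_left_comm, ← Complex.exp_add]
    ring_nf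
  have hIic : ∫ v in Iic 0, f v = 1 / (c - s * Complex.I) ^ 2 := by
    rw [← neg_zero, ← integral_comp_neg_Ioi,
      ← integral_Ioi_ofReal_mul_cexp_neg_mul (by simpa using hc)]
    refine setIntegral_congr_fun measurableSet_Ioi fun v hv => ?_
    simp only [f, abs_neg, abs_of_pos (mem_Ioi.mp hv), s]
    push_cast
    rw [mul_left_comm, ← Complex.exp_add]
    ring_nf
  rw [← integral_Iic_add_Ioi hf.integrableOn hf.integrableOn, hIic, hIoi]
  have hplus : (c : ℂ) + s * Complex.I ≠ 0 := fun h => by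
    simpa [hc.ne'] using congrArg Complex.re h
  have hminus : (c : ℂ) - s * Complex.I ≠ 0 := fun h => by
    simpa [hc.ne'] using congrArg Complex.re h
  have hsum : (c + s * Complex.I) ^ 2 + (c - s * Complex.I) ^ 2 =
      ((2 * (c ^ 2 - s ^ 2) : ℝ) : ℂ) := by
    push_cast; ring_nf; rw [Complex.I_sq]; ring
  have hprod : (c - s * Complex.I) ^ 2 * (c + s * Complex.I) ^ 2 =
      (((c ^ 2 + s ^ 2) ^ 2 : ℝ) : ℂ) := by
    push_cast; ring_nf; rw [Complex.I_sq, Complex.I_pow_four]; ring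
  rw [div_add_div _ _ (pow_ne_zero 2 hminus) (pow_ne_zero 2 hplus), one_mul, mul_one, hsum, hprod,
    ← Complex.ofReal_div, mul_div_assoc]

lemma integral_cos_mul_mul_sq_sub_sq_div_sq_add_sq_sq (hc : 0 < c) (a : ℝ) :
    ∫ t, cos (t * a) * ((c ^ 2 - t ^ 2) / (c ^ 2 + t ^ 2) ^ 2) =
      π * (|a| * exp (-(c * |a|))) := by
  set w : ℝ → ℂ := fun x => ((|x| * exp (-(c * |x|)) : ℝ) : ℂ)
  set k : ℝ → ℝ := fun t => (c ^ 2 - t ^ 2) / (c ^ 2 + t ^ 2) ^ 2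
  have hFw : 𝓕 w = fun ξ => ((2 * k (2 * π * ξ) : ℝ) : ℂ) :=
    funext (fourier_abs_mul_exp_neg_mul_abs hc)
  have hFw_int : Integrable (𝓕 w) := by
    rw [hFw]
    exact (((integrable_sq_sub_sq_div_sq_add_sq_sq hc.ne').comp_mul_left'
      (by positivity : 2 * π ≠ 0)).const_mul 2).ofReal
  have hinv := (integrable_abs_mul_exp_neg_mul_abs hc).ofReal.fourierInv_fourier_eq hFw_int
    (by fun_prop : Continuous w).continuousAt (v := a)
  rw [Real.fourierInv_eq'] at hinv
  have hint : Integrable fun ξ : ℝ =>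
      Complex.exp (↑(2 * π * inner ℝ ξ a) * Complex.I) • 𝓕 w ξ :=
    hFw_int.bdd_mul (c := 1) (by fun_prop)
      (Eventually.of_forall fun ξ => by rw [Complex.norm_exp_ofReal_mul_I])
  have hre := congrArg Complex.re hinv
  rw [← RCLike.re_eq_complex_re, ← integral_re hint, hFw] at hre
  simp only [smul_eq_mul, RCLike.re_eq_complex_re, Complex.re_mul_ofReal,
    Complex.exp_ofReal_mul_I_re, RCLike.inner_apply, conj_trivial, w, Complex.ofReal_re] at hre
  have hsubst := Measure.integral_comp_mul_left (fun t => cos (t * a) * k t) (2 * π)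
  rw [abs_of_pos (by positivity), smul_eq_mul] at hsubst
  have hhalf : ∫ x, cos (2 * π * x * a) * k (2 * π * x) = |a| * exp (-(c * |a|)) / 2 := by
    rw [eq_div_iff two_ne_zero, ← hre, ← MeasureTheory.integral_mul_const]
    congr 1 with x
    ring_nf
  calc ∫ t, cos (t * a) * k t = 2 * π * ((2 * π)⁻¹ * ∫ t, cos (t * a) * k t) :=
      (mul_inv_cancel_left₀ (by positivity) _).symm
    _ = π * (|a| * exp (-(c * |a|))) := by rw [← hsubst, hhalf]; ring

end Fourier

section Sine

variable {c : ℝ}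

lemma hasDerivAt_mul_cos_div_sq_add_sq (hc : c ≠ 0) (a t : ℝ) :
    HasDerivAt (fun t => t * cos (t * a) / (t ^ 2 + c ^ 2))
      (cos (t * a) * ((c ^ 2 - t ^ 2) / (c ^ 2 + t ^ 2) ^ 2) -
        a * (t * sin (t * a) / (t ^ 2 + c ^ 2))) t := by
  have hpos : t ^ 2 + c ^ 2 ≠ 0 := by positivity
  have hcos : HasDerivAt (fun t => cos (t * a)) (-sin (t * a) * a) t := by
    simpa using ((hasDerivAt_id t).mul_const a).cos
  refine (((hasDerivAt_id' t).fun_mul hcos).fun_div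
    ((hasDerivAt_pow 2 t).add_const (c ^ 2)) hpos).congr_deriv ?_
  field_simp
  ring

lemma mul_integral_mul_sin_div_sq_add_sq (hc : c ≠ 0) (a T : ℝ) :
    a * ∫ t in (-T)..T, t * sin (t * a) / (t ^ 2 + c ^ 2) =
      (∫ t in (-T)..T, cos (t * a) * ((c ^ 2 - t ^ 2) / (c ^ 2 + t ^ 2) ^ 2)) -
        2 * (T * cos (T * a) / (T ^ 2 + c ^ 2)) := by
  have hden : ∀ t : ℝ, t ^ 2 + c ^ 2 ≠ 0 := fun t => by positivity
  have hden' : ∀ t : ℝ, (c ^ 2 + t ^ 2) ^ 2 ≠ 0 := fun t => by positivity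
  have hFTC := integral_eq_sub_of_hasDerivAt (a := -T) (b := T)
    (fun t _ => hasDerivAt_mul_cos_div_sq_add_sq hc a t)
    (Continuous.intervalIntegrable (by fun_prop (disch := exact hden _)) _ _)
  rw [integral_sub (Continuous.intervalIntegrable (by fun_prop (disch := exact hden' _)) _ _)
    (Continuous.intervalIntegrable (by fun_prop (disch := exact hden _)) _ _),
    intervalIntegral.integral_const_mul] at hFTC
  simp only [neg_mul, cos_neg, even_two, Even.neg_pow, neg_div, sub_neg_eq_add] at hFTC
  linarith

lemma tendsto_mul_cos_div_sq_add_sq_atTop (c a : ℝ) :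
    Tendsto (fun T : ℝ => T * cos (T * a) / (T ^ 2 + c ^ 2)) atTop (𝓝 0) := by
  refine squeeze_zero_norm' ?_ tendsto_inv_atTop_zero
  filter_upwards [eventually_gt_atTop 0] with T hT
  have hden : 0 < T ^ 2 + c ^ 2 := by positivity
  rw [Real.norm_eq_abs, abs_div, abs_mul, abs_of_pos hT, abs_of_pos hden, div_le_iff₀ hden]
  calc T * |cos (T * a)| ≤ T * 1 := by gcongr; exact abs_cos_le_one _
    _ ≤ T⁻¹ * (T ^ 2 + c ^ 2) := by field_simp; nlinarith [sq_nonneg c]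

theorem tendsto_integral_mul_sin_div_sq_add_sq (hc : 0 < c) (a : ℝ) :
    Tendsto (fun T : ℝ => ∫ t in (-T)..T, t * sin (t * a) / (t ^ 2 + c ^ 2)) atTop
      (𝓝 (π * Real.sign a * exp (-(c * |a|)))) := by
  rcases eq_or_ne a 0 with rfl | ha
  · simp
  have hcosk : Integrable fun t : ℝ => cos (t * a) * ((c ^ 2 - t ^ 2) / (c ^ 2 + t ^ 2) ^ 2) :=
    (integrable_sq_sub_sq_div_sq_add_sq_sq hc.ne').bdd_mul (c := 1) (by fun_prop)
      (Eventually.of_forall fun t => abs_cos_le_one _)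
  have hmul : Tendsto (fun T : ℝ => a * ∫ t in (-T)..T, t * sin (t * a) / (t ^ 2 + c ^ 2))
      atTop (𝓝 (π * (|a| * exp (-(c * |a|))))) := by
    simp_rw [mul_integral_mul_sin_div_sq_add_sq hc.ne']
    have h := (intervalIntegral_tendsto_integral hcosk tendsto_neg_atTop_atBot tendsto_id).sub
      ((tendsto_mul_cos_div_sq_add_sq_atTop c a).const_mul 2)
    rwa [mul_zero, sub_zero, integral_cos_mul_mul_sq_sub_sq_div_sq_add_sq_sq hc] at h
  have hsign : |a| / a = Real.sign a := by
    rcases ha.lt_or_gt with hneg | hpos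
    · rw [abs_of_neg hneg, Real.sign_of_neg hneg, neg_div_self ha]
    · rw [abs_of_pos hpos, Real.sign_of_pos hpos, div_self ha]
  convert hmul.const_mul a⁻¹ using 1
  · ext T; rw [inv_mul_cancel_left₀ ha]
  · rw [← hsign]; ring_nf

end Sine

theorem stmt_4 (j r : ℝ) (hj : 0 < j) (hjr : j < r) :
    Tendsto (fun T : ℝ =>
        ∫ t in (-T)..T, t * Real.sin (t * Real.log (j / r)) / (t ^ 2 + 9 / 4))
      atTop (nhds (-(Real.pi * (j / r) ^ ((3 / 2 : ℝ))))) := by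
  have hjr_pos : 0 < j / r := div_pos hj (hj.trans hjr)
  have hlog : log (j / r) < 0 := log_neg hjr_pos ((div_lt_one (hj.trans hjr)).2 hjr)
  convert tendsto_integral_mul_sin_div_sq_add_sq (c := 3 / 2) (by norm_num) (log (j / r)) using 3
  · norm_num
  · rw [Real.sign_of_neg hlog, abs_of_neg hlog, rpow_def_of_pos hjr_pos]
    ring_nf
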